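/- Let α ∈ (0,2], A > 0, h > 0, and define Ω²(ξ) = σ_h(ξ) ( σ_h(ξ) − 2A² ) with σ_h(ξ) = |(2/h) sin(hξ/2)|^α (the modulational-instability dispersion relation of the focusing fDNLS linearized around the CW solution A e^{i|A|²t}). Then for ξ ∈ (0, π/h), (d/dξ) Ω²(ξ) = α h cot(hξ/2) ((2/h) sin(hξ/2))^α ( ((2/h) sin(hξ/2))^α − A² ). Moreover: (i) if (2/h)^α > A², then ξ_m = (2/h) arcsin( h A^{2/α} / 2 ) lies in (0, π/h), is the unique maximizer of −Ω² on (0, π/h), and the maximal squared gain is −Ω²(ξ_m) = A⁴, so the maximal gain is Ω_m′ = A², independent of h and α; (ii) if (2/h)^α ≤ A², then −Ω² is maximized over (0, π/h] at the band edge ξ = π/h, with maximal gain Ω_m = √( (2A² − (2/h)^α) (2/h)^α ). -/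

import Mathlib

/-!
Write `s(ξ) = (2/h) sin(hξ/2)`, so that `σ_h = s^α` on `(0, π/h)`. Completing the square gives
`-Ω² = A⁴ - (σ_h - A²)²`, a function of `σ_h` alone which increases up to `σ_h = A²` and peaks
there at `A⁴`. Since `s` maps `(0, π/h)` increasingly onto `(0, 2/h)` with inverse
`c ↦ (2/h) arcsin(hc/2)`, the level `σ_h = A²`, i.e. `s = A^{2/α}`, is reached at exactly one
frequency when `A² < (2/h)^α`; otherwise `σ_h ≤ (2/h)^α ≤ A²` throughout and the largest value of
`σ_h` is attained at the band edge `π/h`.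
-/

noncomputable section

open Real Set

/-- Symbol `σ_h(ξ) = |(2/h) sin(hξ/2)|^α` of the discrete fractional Laplacian on the
lattice of mesh `h`. -/
def symb (h α ξ : ℝ) : ℝ := |2 / h * Real.sin (h * ξ / 2)| ^ α

/-- The modulational-instability dispersion relation `Ω²(ξ) = σ_h(ξ)(σ_h(ξ) - 2A²)` of the
focusing fDNLS linearized around the CW solution `A e^{i|A|²t}`. -/
def Omega2 (h α A ξ : ℝ) : ℝ := symb h α ξ * (symb h α ξ - 2 * A ^ 2)

lemma rpow_two_div_rpow {A : ℝ} (hA : 0 ≤ A) {α : ℝ} (hα : α ≠ 0) :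
    (A ^ (2 / α)) ^ α = A ^ 2 := by
  rw [← rpow_mul hA, div_mul_cancel₀ _ hα, rpow_two]

section ScaledSine

variable {h ξ : ℝ}

lemma mul_div_two_mem_Ioo (hh : 0 < h) (hξ : ξ ∈ Ioo 0 (π / h)) :
    h * ξ / 2 ∈ Ioo 0 (π / 2) := by
  have := (lt_div_iff₀' hh).mp hξ.2
  exact ⟨by have := hξ.1; positivity, by linarith⟩

lemma sin_mul_div_two_pos (hh : 0 < h) (hξ : ξ ∈ Ioo 0 (π / h)) : 0 < sin (h * ξ / 2) := by
  obtain ⟨hpos, hlt⟩ := mul_div_two_mem_Ioo hh hξ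
  exact sin_pos_of_pos_of_lt_pi hpos (by linarith [pi_pos])

lemma two_div_mul_arcsin_mem_Ioo (hh : 0 < h) {c : ℝ} (hc : c ∈ Ioo 0 (2 / h)) :
    2 / h * arcsin (h * c / 2) ∈ Ioo 0 (π / h) := by
  have hc1 : h * c / 2 < 1 := by
    have := (lt_div_iff₀' hh).mp hc.2
    linarith
  have hpos : 0 < arcsin (h * c / 2) := arcsin_pos.mpr (by have := hc.1; positivity)
  have hlt : arcsin (h * c / 2) < π / 2 := arcsin_lt_pi_div_two.mpr hc1
  refine ⟨by positivity, ?_⟩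
  rw [lt_div_iff₀ hh]
  calc 2 / h * arcsin (h * c / 2) * h = 2 * arcsin (h * c / 2) := by field_simp
    _ < π := by linarith

lemma two_div_mul_sin_two_div_mul_arcsin (hh : 0 < h) {c : ℝ} (hc : c ∈ Ioo 0 (2 / h)) :
    2 / h * sin (h * (2 / h * arcsin (h * c / 2)) / 2) = c := by
  have hc1 : h * c / 2 ≤ 1 := by
    have := (lt_div_iff₀' hh).mp hc.2
    linarith
  have hc0 : -1 ≤ h * c / 2 := by have := hc.1; nlinarith
  rw [show h * (2 / h * arcsin (h * c / 2)) / 2 = arcsin (h * c / 2) by field_simp,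
    sin_arcsin hc0 hc1]
  field_simp

lemma eq_two_div_mul_arcsin (hh : 0 < h) (hξ : ξ ∈ Ioo 0 (π / h)) :
    ξ = 2 / h * arcsin (h * (2 / h * sin (h * ξ / 2)) / 2) := by
  obtain ⟨hpos, hlt⟩ := mul_div_two_mem_Ioo hh hξ
  rw [show h * (2 / h * sin (h * ξ / 2)) / 2 = sin (h * ξ / 2) by field_simp,
    arcsin_sin (by linarith [pi_pos]) hlt.le]
  field_simp

lemma hasDerivAt_two_div_mul_sin_rpow (hh : h ≠ 0) (hs : sin (h * ξ / 2) ≠ 0) (α : ℝ) :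
    HasDerivAt (fun x => (2 / h * sin (h * x / 2)) ^ α)
      (α * h / 2 * (cos (h * ξ / 2) / sin (h * ξ / 2)) * (2 / h * sin (h * ξ / 2)) ^ α) ξ := by
  have hne : 2 / h * sin (h * ξ / 2) ≠ 0 := mul_ne_zero (by positivity) hs
  have hlin : HasDerivAt (fun x : ℝ => h * x / 2) (h / 2) ξ := by
    simpa using ((hasDerivAt_id ξ).const_mul h).div_const 2
  convert (hlin.sin.const_mul (2 / h)).rpow_const (p := α) (Or.inl hne) using 1
  rw [rpow_sub_one hne]
  field_simp

end ScaledSine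

section Symbol

variable {h α : ℝ}

lemma symb_of_mem_Ioo (hh : 0 < h) {ξ : ℝ} (hξ : ξ ∈ Ioo 0 (π / h)) :
    symb h α ξ = (2 / h * sin (h * ξ / 2)) ^ α := by
  have := sin_mul_div_two_pos hh hξ
  rw [symb, abs_of_pos (by positivity)]

lemma symb_nonneg (h α ξ : ℝ) : 0 ≤ symb h α ξ := rpow_nonneg (abs_nonneg _) α

lemma symb_le (hh : 0 < h) (hα : 0 ≤ α) (ξ : ℝ) : symb h α ξ ≤ (2 / h) ^ α := by
  refine rpow_le_rpow (abs_nonneg _) ?_ hα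
  rw [abs_mul, abs_of_pos (by positivity : (0 : ℝ) < 2 / h)]
  exact mul_le_of_le_one_right (by positivity) (abs_sin_le_one _)

lemma symb_pi_div (hh : 0 < h) : symb h α (π / h) = (2 / h) ^ α := by
  rw [symb, show h * (π / h) / 2 = π / 2 by field_simp, sin_pi_div_two, mul_one,
    abs_of_pos (by positivity)]

end Symbol

section Dispersion

variable {h α A : ℝ}

lemma neg_Omega2_eq (h α A ξ : ℝ) : -Omega2 h α A ξ = A ^ 4 - (symb h α ξ - A ^ 2) ^ 2 := by
  rw [Omega2]
  ring

lemma neg_Omega2_le (h α A ξ : ℝ) : -Omega2 h α A ξ ≤ A ^ 4 := by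
  rw [neg_Omega2_eq]
  exact sub_le_self _ (sq_nonneg _)

lemma symb_eq_of_neg_Omega2_eq {ξ : ℝ} (hξ : -Omega2 h α A ξ = A ^ 4) :
    symb h α ξ = A ^ 2 := by
  rw [neg_Omega2_eq, sub_eq_self, sq_eq_zero_iff, sub_eq_zero] at hξ
  exact hξ

lemma neg_Omega2_le_of_symb_le {ξ η : ℝ} (hle : symb h α ξ ≤ symb h α η)
    (hη : symb h α η ≤ A ^ 2) : -Omega2 h α A ξ ≤ -Omega2 h α A η := by
  rw [neg_Omega2_eq, neg_Omega2_eq]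
  nlinarith [symb_nonneg h α ξ]

lemma hasDerivAt_Omega2 (hh : 0 < h) {ξ : ℝ} (hξ : ξ ∈ Ioo 0 (π / h)) :
    HasDerivAt (Omega2 h α A)
      (α * h * (cos (h * ξ / 2) / sin (h * ξ / 2)) * (2 / h * sin (h * ξ / 2)) ^ α *
        ((2 / h * sin (h * ξ / 2)) ^ α - A ^ 2)) ξ := by
  have hT := hasDerivAt_two_div_mul_sin_rpow hh.ne' (sin_mul_div_two_pos hh hξ).ne' α
  have hOmega : Omega2 h α A =ᶠ[nhds ξ] fun x =>
      (2 / h * sin (h * x / 2)) ^ α * ((2 / h * sin (h * x / 2)) ^ α - 2 * A ^ 2) := by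
    filter_upwards [Ioo_mem_nhds hξ.1 hξ.2] with x hx
    rw [Omega2, symb_of_mem_Ioo hh hx]
  exact ((hT.mul (hT.sub_const (2 * A ^ 2))).congr_of_eventuallyEq hOmega).congr_deriv (by ring)

end Dispersion

theorem statement19_general (α A h : ℝ) (hα : 0 < α) (hA : 0 < A) (hh : 0 < h) :
    (∀ ξ ∈ Set.Ioo (0:ℝ) (Real.pi / h),
      deriv (Omega2 h α A) ξ =
        α * h * (Real.cos (h * ξ / 2) / Real.sin (h * ξ / 2)) *
          (2 / h * Real.sin (h * ξ / 2)) ^ α *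
          ((2 / h * Real.sin (h * ξ / 2)) ^ α - A ^ 2)) ∧
    (A ^ 2 < (2 / h) ^ α →
      (2 / h * Real.arcsin (h * A ^ (2 / α) / 2)) ∈ Set.Ioo (0:ℝ) (Real.pi / h) ∧
      (∀ ξ ∈ Set.Ioo (0:ℝ) (Real.pi / h),
        -Omega2 h α A ξ ≤ -Omega2 h α A (2 / h * Real.arcsin (h * A ^ (2 / α) / 2))) ∧
      (∀ ξ ∈ Set.Ioo (0:ℝ) (Real.pi / h),
        -Omega2 h α A ξ = -Omega2 h α A (2 / h * Real.arcsin (h * A ^ (2 / α) / 2)) →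
          ξ = 2 / h * Real.arcsin (h * A ^ (2 / α) / 2)) ∧
      -Omega2 h α A (2 / h * Real.arcsin (h * A ^ (2 / α) / 2)) = A ^ 4) ∧
    ((2 / h) ^ α ≤ A ^ 2 →
      (∀ ξ ∈ Set.Ioc (0:ℝ) (Real.pi / h), -Omega2 h α A ξ ≤ -Omega2 h α A (Real.pi / h)) ∧
      Real.sqrt (-Omega2 h α A (Real.pi / h)) =
        Real.sqrt ((2 * A ^ 2 - (2 / h) ^ α) * (2 / h) ^ α)) := by
  refine ⟨fun ξ hξ => (hasDerivAt_Omega2 hh hξ).deriv, fun hlow => ?_, fun hhigh => ?_⟩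
  · have hroot := rpow_two_div_rpow hA.le hα.ne'
    have hc : A ^ (2 / α) ∈ Ioo 0 (2 / h) :=
      ⟨by positivity, (rpow_lt_rpow_iff (by positivity) (by positivity) hα).mp (hroot ▸ hlow)⟩
    have hmem := two_div_mul_arcsin_mem_Ioo hh hc
    have hpeak : -Omega2 h α A (2 / h * arcsin (h * A ^ (2 / α) / 2)) = A ^ 4 := by
      rw [neg_Omega2_eq, symb_of_mem_Ioo hh hmem, two_div_mul_sin_two_div_mul_arcsin hh hc,
        hroot, sub_self]
      ring
    refine ⟨hmem, fun ξ _ => hpeak ▸ neg_Omega2_le h α A ξ, fun ξ hξ heq => ?_, hpeak⟩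
    have hsymb := symb_eq_of_neg_Omega2_eq (heq.trans hpeak)
    have hs := sin_mul_div_two_pos hh hξ
    rw [symb_of_mem_Ioo hh hξ, ← hroot, rpow_left_inj (by positivity) (by positivity) hα.ne']
      at hsymb
    rw [eq_two_div_mul_arcsin hh hξ, hsymb]
  · have hedge := symb_pi_div (α := α) hh
    refine ⟨fun ξ _ => neg_Omega2_le_of_symb_le (hedge ▸ symb_le hh hα.le ξ) (hedge ▸ hhigh), ?_⟩
    rw [Omega2, hedge]
    congr 1
    ring

/-- Section 5: derivative of the MI dispersion relation, the
fastest-growth frequency, and the maximum gain. -/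
theorem statement19 (α A h : ℝ) (hα : 0 < α) (hα' : α ≤ 2) (hA : 0 < A) (hh : 0 < h) :
    (∀ ξ ∈ Set.Ioo (0:ℝ) (Real.pi / h),
      deriv (Omega2 h α A) ξ =
        α * h * (Real.cos (h * ξ / 2) / Real.sin (h * ξ / 2)) *
          (2 / h * Real.sin (h * ξ / 2)) ^ α *
          ((2 / h * Real.sin (h * ξ / 2)) ^ α - A ^ 2)) ∧
    (A ^ 2 < (2 / h) ^ α →
      (2 / h * Real.arcsin (h * A ^ (2 / α) / 2)) ∈ Set.Ioo (0:ℝ) (Real.pi / h) ∧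
      (∀ ξ ∈ Set.Ioo (0:ℝ) (Real.pi / h),
        -Omega2 h α A ξ ≤ -Omega2 h α A (2 / h * Real.arcsin (h * A ^ (2 / α) / 2))) ∧
      (∀ ξ ∈ Set.Ioo (0:ℝ) (Real.pi / h),
        -Omega2 h α A ξ = -Omega2 h α A (2 / h * Real.arcsin (h * A ^ (2 / α) / 2)) →
          ξ = 2 / h * Real.arcsin (h * A ^ (2 / α) / 2)) ∧
      -Omega2 h α A (2 / h * Real.arcsin (h * A ^ (2 / α) / 2)) = A ^ 4) ∧
    ((2 / h) ^ α ≤ A ^ 2 →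
      (∀ ξ ∈ Set.Ioc (0:ℝ) (Real.pi / h), -Omega2 h α A ξ ≤ -Omega2 h α A (Real.pi / h)) ∧
      Real.sqrt (-Omega2 h α A (Real.pi / h)) =
        Real.sqrt ((2 * A ^ 2 - (2 / h) ^ α) * (2 / h) ^ α)) :=
  statement19_general α A h hα hA hh
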